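/- Let k^{abc} be a Killing 3-tensor on ℝ^n. Then the third-order differential operator D defined on smooth functions f : ℝ^n → ℝ by D f = k^{abc} ∂_a ∂_b ∂_c f + (3/2)(∂_r k^{rbc}) ∂_b ∂_c f + (1/4)(∂_r ∂_s k^{rsc}) ∂_c f commutes with the Laplace operator: Δ∘D = D∘Δ on smooth functions. -/

import Mathlib

/-!
Work in the algebra of smooth functions, where the `∂_a` are commuting derivations; then `Δ`
commutes with every `∂_a` and `Δ(f h) = (Δf) h + 2 ∂^m f ∂_m h + f Δh`. Put `T^{bc} = ∂_r k^{rbc}`,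
`S^c = ∂_r ∂_s k^{rsc}` and `τ^c = g_{pq} k^{pqc}`. By the product rule, `Δ D f - D Δ f` is built
from `∂^m k^{abc} ∂_{mabc} f`, `Δk^{abc} ∂_{abc} f`, `∂^m T^{bc} ∂_{mbc} f`, `ΔT^{bc} ∂_{bc} f`,
`∂^m S^c ∂_{mc} f` and `ΔS^c ∂_c f`, and since the derivatives of `f` are symmetric only the
symmetrised coefficients matter. The Killing equation kills the first term. Its divergence
`Δk^{bcd} + 3 ∂^{(b} T^{cd)} = 0` makes the next two cancel, which is where the coefficient `3/2`
comes from. Its trace `T^{cd} + ∂^{(c} τ^{d)} = 0` shows that `T` is trace-free and `Δτ = -2S`.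
Comparing `Δ` of the trace identity with `∂_b` of the divergence identity then gives `ΔT = 0` and
`∂^{(c} S^{d)} = 0`, and hence `ΔS = 0`.
-/

noncomputable section

/-- Partial derivative `∂_a f` in the `a`-th coordinate direction on `ℝⁿ`. -/
def pd {n : ℕ} (a : Fin n) (f : (Fin n → ℝ) → ℝ) : (Fin n → ℝ) → ℝ :=
  fun x => fderiv ℝ f x (Pi.single a 1)

/-- Raised partial derivative `∂^a f = g^{ab} ∂_b f`. -/
def pdUp {n : ℕ} (ginv : Matrix (Fin n) (Fin n) ℝ) (a : Fin n)
    (f : (Fin n → ℝ) → ℝ) : (Fin n → ℝ) → ℝ :=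
  fun x => ∑ b, ginv a b * pd b f x

/-- Laplace operator `Δ f = g^{ab} ∂_a ∂_b f`. -/
def lap {n : ℕ} (ginv : Matrix (Fin n) (Fin n) ℝ) (f : (Fin n → ℝ) → ℝ) :
    (Fin n → ℝ) → ℝ :=
  fun x => ∑ a, ∑ b, ginv a b * pd a (pd b f) x

/-- Iterated partial derivative `∂_{i 0} ⋯ ∂_{i (m-1)} f` along a tuple of indices. -/
def pdIter {n : ℕ} : (m : ℕ) → (Fin m → Fin n) → ((Fin n → ℝ) → ℝ) → ((Fin n → ℝ) → ℝ)
  | 0, _, f => f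
  | m + 1, i, f => pd (i 0) (pdIter m (fun j => i j.succ) f)

/-- A (smooth, totally symmetric) Killing `ℓ`-tensor: `∂^{(a₀} k^{a₁…a_ℓ)} = 0`. -/
def IsKillingTensor {n : ℕ} (ginv : Matrix (Fin n) (Fin n) ℝ) (ℓ : ℕ)
    (k : (Fin ℓ → Fin n) → (Fin n → ℝ) → ℝ) : Prop :=
  (∀ i, ContDiff ℝ (⊤ : ℕ∞) (k i)) ∧
  (∀ (σ : Equiv.Perm (Fin ℓ)) (i : Fin ℓ → Fin n), k (i ∘ σ) = k i) ∧
  (∀ (i : Fin (ℓ + 1) → Fin n) (x : Fin n → ℝ),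
    ∑ σ : Equiv.Perm (Fin (ℓ + 1)),
      pdUp ginv (i (σ 0)) (k (fun j => i (σ j.succ))) x = 0)

end

open Finset
open scoped ContDiff

section Symmetrization

variable {ι R : Type*} [Fintype ι]

theorem sum_comm_three [AddCommMonoid R] (F : ι → ι → ι → R) :
    ∑ a, ∑ b, ∑ c, F a b c = ∑ c, ∑ a, ∑ b, F a b c :=
  (sum_congr rfl fun _ _ => sum_comm).trans sum_comm

theorem sum_comm_four [AddCommMonoid R] (F : ι → ι → ι → ι → R) :
    ∑ a, ∑ b, ∑ c, ∑ d, F a b c d = ∑ d, ∑ a, ∑ b, ∑ c, F a b c d :=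
  (sum_congr rfl fun a _ => sum_comm_three (F a)).trans sum_comm

variable [NonUnitalNonAssocSemiring R]

theorem sum_sum_add_swap_mul (A B : ι → ι → R) (hB : ∀ a b, B b a = B a b) :
    ∑ a, ∑ b, (A a b + A b a) * B a b = 2 • ∑ a, ∑ m, A m a * B m a := by
  simp only [add_mul, sum_add_distrib, two_nsmul]
  congr 1
  · rw [sum_comm]
  · simp only [hB]

theorem sum_sum_sum_add_cycle_mul (A B : ι → ι → ι → R) (hB₀₁ : ∀ a b c, B b a c = B a b c)
    (hB₁₂ : ∀ a b c, B a c b = B a b c) :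
    ∑ a, ∑ b, ∑ c, (A a b c + A b a c + A c a b) * B a b c =
      3 • ∑ a, ∑ b, ∑ m, A m a b * B m a b := by
  have h₁ : ∑ a, ∑ b, ∑ c, A a b c * B a b c = ∑ a, ∑ b, ∑ m, A m a b * B m a b :=
    (sum_comm_three fun a b m => A m a b * B m a b).symm
  have h₂ : ∑ a, ∑ b, ∑ c, A b a c * B a b c = ∑ a, ∑ b, ∑ c, A a b c * B a b c := by
    rw [sum_comm]; simp only [hB₀₁]
  have h₃ : ∑ a, ∑ b, ∑ c, A c a b * B a b c = ∑ a, ∑ b, ∑ m, A m a b * B m a b := by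
    refine sum_congr rfl fun a _ => sum_congr rfl fun b _ => sum_congr rfl fun c _ => ?_
    rw [← hB₁₂ a b c, ← hB₀₁ a c b]
  simp only [add_mul, sum_add_distrib, h₂, h₁, h₃]
  abel

theorem sum_sum_sum_sum_add_cycle_mul (A B : ι → ι → ι → ι → R)
    (hB₀₁ : ∀ a b c d, B b a c d = B a b c d) (hB₁₂ : ∀ a b c d, B a c b d = B a b c d)
    (hB₂₃ : ∀ a b c d, B a b d c = B a b c d) :
    ∑ a, ∑ b, ∑ c, ∑ d, (A a b c d + A b a c d + A c a b d + A d a b c) * B a b c d =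
      4 • ∑ a, ∑ b, ∑ c, ∑ m, A m a b c * B m a b c := by
  have h₁ : ∑ a, ∑ b, ∑ c, ∑ d, A a b c d * B a b c d =
      ∑ a, ∑ b, ∑ c, ∑ m, A m a b c * B m a b c :=
    (sum_comm_four fun a b c m => A m a b c * B m a b c).symm
  have h₂ : ∑ a, ∑ b, ∑ c, ∑ d, A b a c d * B a b c d =
      ∑ a, ∑ b, ∑ c, ∑ d, A a b c d * B a b c d := by
    rw [sum_comm]; simp only [hB₀₁]
  have h₃ : ∑ a, ∑ b, ∑ c, ∑ d, A c a b d * B a b c d =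
      ∑ a, ∑ b, ∑ c, ∑ d, A a b c d * B a b c d := by
    rw [sum_comm_three fun a b c => ∑ d, A c a b d * B a b c d]
    refine sum_congr rfl fun c _ => sum_congr rfl fun a _ => sum_congr rfl fun b _ =>
      sum_congr rfl fun d _ => ?_
    rw [hB₀₁ a c b d, hB₁₂ a b c d]
  have h₄ : ∑ a, ∑ b, ∑ c, ∑ d, A d a b c * B a b c d =
      ∑ a, ∑ b, ∑ c, ∑ m, A m a b c * B m a b c := by
    refine sum_congr rfl fun a _ => sum_congr rfl fun b _ => sum_congr rfl fun c _ =>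
      sum_congr rfl fun d _ => ?_
    rw [← hB₂₃ a b c d, ← hB₁₂ a b d c, ← hB₀₁ a d b c]
  simp only [add_mul, sum_add_distrib, h₂, h₃, h₁, h₄]
  abel

end Symmetrization

noncomputable section

variable {n : ℕ}

def smoothFunctions (n : ℕ) : Subalgebra ℝ ((Fin n → ℝ) → ℝ) where
  carrier := {f | ContDiff ℝ ∞ f}
  mul_mem' {_ _} (hf : ContDiff ℝ ∞ _) hh := hf.mul hh
  add_mem' {_ _} (hf : ContDiff ℝ ∞ _) hh := hf.add hh
  algebraMap_mem' c := (contDiff_const : ContDiff ℝ ∞ fun _ => c)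

section Calculus

variable {f h : (Fin n → ℝ) → ℝ}

theorem contDiff_pd (hf : ContDiff ℝ ∞ f) (a : Fin n) : ContDiff ℝ ∞ (pd a f) :=
  (hf.fderiv_right (m := ∞) (by simp)).clm_apply contDiff_const

theorem pd_add (hf : ContDiff ℝ ∞ f) (hh : ContDiff ℝ ∞ h) (a : Fin n) :
    pd a (f + h) = pd a f + pd a h := by
  ext x
  simp [pd, fderiv_add (hf.differentiable (by simp)).differentiableAt
    (hh.differentiable (by simp)).differentiableAt]

theorem pd_const_smul (c : ℝ) (a : Fin n) : pd a (c • f) = c • pd a f := by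
  ext x
  simp [pd, fderiv_const_smul_field]

theorem pd_mul (hf : ContDiff ℝ ∞ f) (hh : ContDiff ℝ ∞ h) (a : Fin n) :
    pd a (f * h) = f * pd a h + h * pd a f := by
  ext x
  simp [pd, fderiv_mul (hf.differentiable (by simp)).differentiableAt
    (hh.differentiable (by simp)).differentiableAt]

theorem pd_const (c : ℝ) (a : Fin n) : pd a (fun _ => c) = 0 := by
  ext x
  simp [pd]

theorem pd_comm (hf : ContDiff ℝ ∞ f) (a b : Fin n) : pd a (pd b f) = pd b (pd a f) := by
  ext x
  have hd : DifferentiableAt ℝ (fderiv ℝ f) x :=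
    ((hf.fderiv_right (m := ∞) (by simp)).differentiable (by simp)).differentiableAt
  have hpd : ∀ c d, pd c (pd d f) x = fderiv ℝ (fderiv ℝ f) x (Pi.single c 1) (Pi.single d 1) :=
    fun c d => by
      show fderiv ℝ (fun y => fderiv ℝ f y (Pi.single d 1)) x (Pi.single c 1) = _
      rw [fderiv_clm_apply hd (differentiableAt_const _)]
      simp
  rw [hpd, hpd]
  exact (hf.contDiffAt.isSymmSndFDerivAt (by
    rw [minSmoothness_of_isRCLikeNormedField]; exact WithTop.coe_le_coe.2 le_top)) _ _

end Calculus

local notation "𝒮" => smoothFunctions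

def pdDer (a : Fin n) : Derivation ℝ (𝒮 n) (𝒮 n) where
  toFun f := ⟨pd a f, contDiff_pd f.2 a⟩
  map_add' f h := Subtype.ext (pd_add f.2 h.2 a)
  map_smul' c _ := Subtype.ext (pd_const_smul c a)
  map_one_eq_zero' := Subtype.ext (pd_const 1 a)
  leibniz' f h := Subtype.ext (pd_mul f.2 h.2 a)

@[simp]
theorem coe_pdDer (a : Fin n) (f : 𝒮 n) : (pdDer a f : (Fin n → ℝ) → ℝ) = pd a f := rfl

theorem pdDer_comm (a b : Fin n) (f : 𝒮 n) : pdDer a (pdDer b f) = pdDer b (pdDer a f) :=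
  Subtype.ext (pd_comm f.2 a b)

variable (ginv : Matrix (Fin n) (Fin n) ℝ)

def pdUpDer (a : Fin n) : Derivation ℝ (𝒮 n) (𝒮 n) := ∑ b, ginv a b • pdDer b

theorem pdUpDer_apply (a : Fin n) (f : 𝒮 n) : pdUpDer ginv a f = ∑ b, ginv a b • pdDer b f := by
  rw [pdUpDer, ← Derivation.coeFnAddMonoidHom_apply, map_sum, Finset.sum_apply]
  simp [Derivation.coeFnAddMonoidHom_apply]

def lapOp : 𝒮 n →ₗ[ℝ] 𝒮 n := ∑ a, (pdDer a : 𝒮 n →ₗ[ℝ] 𝒮 n) ∘ₗ (pdUpDer ginv a : 𝒮 n →ₗ[ℝ] 𝒮 n)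

theorem lapOp_apply (f : 𝒮 n) : lapOp ginv f = ∑ a, pdDer a (pdUpDer ginv a f) := by
  simp [lapOp]

theorem coe_lapOp (f : 𝒮 n) : (lapOp ginv f : (Fin n → ℝ) → ℝ) = lap ginv f := by
  ext x
  simp [lapOp_apply, pdUpDer_apply, lap]

theorem coe_pdUpDer (a : Fin n) (f : 𝒮 n) :
    (pdUpDer ginv a f : (Fin n → ℝ) → ℝ) = pdUp ginv a f := by
  ext x
  simp [pdUpDer_apply, pdUp]

theorem pdDer_pdUpDer_comm (a b : Fin n) (f : 𝒮 n) :
    pdDer a (pdUpDer ginv b f) = pdUpDer ginv b (pdDer a f) := by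
  simp [pdUpDer_apply, pdDer_comm a]

theorem pdDer_lapOp_comm (a : Fin n) (f : 𝒮 n) :
    pdDer a (lapOp ginv f) = lapOp ginv (pdDer a f) := by
  simp [lapOp_apply, pdDer_pdUpDer_comm, pdDer_comm a]

theorem pdUpDer_lapOp_comm (a : Fin n) (f : 𝒮 n) :
    pdUpDer ginv a (lapOp ginv f) = lapOp ginv (pdUpDer ginv a f) := by
  simp [pdUpDer_apply, pdDer_lapOp_comm]

theorem sum_pdUpDer_mul_pdDer_comm (hsym : ginv.IsSymm) (f h : 𝒮 n) :
    ∑ a, pdUpDer ginv a f * pdDer a h = ∑ a, pdUpDer ginv a h * pdDer a f := by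
  simp only [pdUpDer_apply, sum_mul, smul_mul_assoc]
  rw [sum_comm]
  refine sum_congr rfl fun a _ => sum_congr rfl fun b _ => ?_
  rw [hsym.apply a b, mul_comm]

theorem lapOp_mul (hsym : ginv.IsSymm) (f h : 𝒮 n) :
    lapOp ginv (f * h) =
      lapOp ginv f * h + 2 • ∑ m, pdUpDer ginv m f * pdDer m h + f * lapOp ginv h := by
  have hcross := sum_pdUpDer_mul_pdDer_comm ginv hsym f h
  simp only [lapOp_apply, Derivation.leibniz, smul_eq_mul, map_add, sum_add_distrib, ← mul_sum]
  linear_combination -hcross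

theorem sum_smul_pdUpDer {g : Matrix (Fin n) (Fin n) ℝ} (hg : g.IsSymm) (hginv : g * ginv = 1)
    (d : Fin n) (f : 𝒮 n) : ∑ a, g a d • pdUpDer ginv a f = pdDer d f := by
  have hδ : ∀ b, ∑ a, g a d * ginv a b = if d = b then 1 else 0 := fun b => by
    simpa [Matrix.mul_apply, Matrix.one_apply, hg.apply] using congrFun (congrFun hginv d) b
  simp only [pdUpDer_apply, smul_sum, smul_smul]
  rw [sum_comm]
  simp [← sum_smul, hδ]

theorem sum_sum_smul_pdUpDer_left {g : Matrix (Fin n) (Fin n) ℝ} (hg : g.IsSymm)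
    (hginv : g * ginv = 1) (u : Fin n → 𝒮 n) :
    ∑ p, ∑ q, g p q • pdUpDer ginv p (u q) = ∑ q, pdDer q (u q) := by
  rw [sum_comm]
  exact sum_congr rfl fun q _ => sum_smul_pdUpDer ginv hg hginv q (u q)

theorem sum_sum_smul_pdUpDer_right {g : Matrix (Fin n) (Fin n) ℝ} (hg : g.IsSymm)
    (hginv : g * ginv = 1) (u : Fin n → 𝒮 n) :
    ∑ p, ∑ q, g p q • pdUpDer ginv q (u p) = ∑ p, pdDer p (u p) := by
  refine sum_congr rfl fun p _ => ?_
  simp only [← hg.apply p]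
  exact sum_smul_pdUpDer ginv hg hginv p (u p)

/-- By the symmetry of `K`, the 24 terms of `∂^(a K^bcd)` fall into the four groups of six
summed in `killing`. -/
structure IsKillingTensor₃ (K : Fin n → Fin n → Fin n → 𝒮 n) : Prop where
  swap₀₁ : ∀ a b c, K b a c = K a b c
  swap₁₂ : ∀ a b c, K a c b = K a b c
  killing : ∀ a b c d, pdUpDer ginv a (K b c d) + pdUpDer ginv b (K a c d) +
    pdUpDer ginv c (K a b d) + pdUpDer ginv d (K a b c) = 0

def divergence (K : Fin n → Fin n → Fin n → 𝒮 n) (b c : Fin n) : 𝒮 n := ∑ r, pdDer r (K r b c)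

def doubleDivergence (K : Fin n → Fin n → Fin n → 𝒮 n) (c : Fin n) : 𝒮 n :=
  ∑ r, ∑ s, pdDer r (pdDer s (K r s c))

def metricTrace (g : Matrix (Fin n) (Fin n) ℝ) (K : Fin n → Fin n → Fin n → 𝒮 n) (c : Fin n) :
    𝒮 n :=
  ∑ p, ∑ q, g p q • K p q c

theorem pdUpDer_metricTrace (g : Matrix (Fin n) (Fin n) ℝ) (K : Fin n → Fin n → Fin n → 𝒮 n)
    (e c : Fin n) :
    pdUpDer ginv e (metricTrace g K c) = ∑ p, ∑ q, g p q • pdUpDer ginv e (K p q c) := by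
  simp [metricTrace, map_sum]

def killingOperator (K : Fin n → Fin n → Fin n → 𝒮 n) (u : 𝒮 n) : 𝒮 n :=
  ∑ a, ∑ b, ∑ c, K a b c * pdDer a (pdDer b (pdDer c u)) +
    (3 / 2 : ℝ) • ∑ b, ∑ c, divergence K b c * pdDer b (pdDer c u) +
    (1 / 4 : ℝ) • ∑ c, doubleDivergence K c * pdDer c u

namespace IsKillingTensor₃

variable {ginv} {g : Matrix (Fin n) (Fin n) ℝ} {K : Fin n → Fin n → Fin n → 𝒮 n}
  (hK : IsKillingTensor₃ ginv K)
include hK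

theorem cycle (a b c : Fin n) : K b c a = K a b c :=
  (hK.swap₁₂ b a c).trans (hK.swap₀₁ a b c)

theorem divergence_comm (b c : Fin n) : divergence K c b = divergence K b c := by
  simp only [divergence, hK.swap₁₂]

theorem doubleDivergence_eq (c : Fin n) :
    doubleDivergence K c = ∑ b, pdDer b (divergence K b c) := by
  simp only [doubleDivergence, divergence, map_sum]
  rw [sum_comm]
  exact sum_congr rfl fun r _ => sum_congr rfl fun s _ => by rw [hK.swap₀₁, pdDer_comm]

theorem lapOp_add_pdUpDer_divergence (b c d : Fin n) :
    lapOp ginv (K b c d) + pdUpDer ginv b (divergence K c d) +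
      pdUpDer ginv c (divergence K b d) + pdUpDer ginv d (divergence K b c) = 0 := by
  have h := congrArg (fun v : Fin n → 𝒮 n => ∑ a, pdDer a (v a))
    (funext fun a => hK.killing a b c d)
  simp only [lapOp_apply, divergence, map_sum, pdDer_pdUpDer_comm]
  simpa only [map_add, sum_add_distrib, map_zero, sum_const_zero, pdDer_pdUpDer_comm] using h

theorem two_nsmul_lapOp_divergence_add_pdUpDer_doubleDivergence (c d : Fin n) :
    2 • lapOp ginv (divergence K c d) + pdUpDer ginv c (doubleDivergence K d) +
      pdUpDer ginv d (doubleDivergence K c) = 0 := by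
  have h := congrArg (fun v : Fin n → 𝒮 n => ∑ b, pdDer b (v b))
    (funext fun b => hK.lapOp_add_pdUpDer_divergence b c d)
  simp only [map_add, sum_add_distrib, map_zero, sum_const_zero, pdDer_lapOp_comm] at h
  have hdiv : ∀ e e', ∑ b, pdDer b (pdUpDer ginv e (divergence K b e')) =
      pdUpDer ginv e (doubleDivergence K e') := fun e e' => by
    simp only [pdDer_pdUpDer_comm, ← map_sum, hK.doubleDivergence_eq]
  rw [← map_sum, ← divergence, ← lapOp_apply, hdiv, hdiv] at h
  linear_combination (norm := module) h

theorem sum_pdUpDer_mul_pdDer_eq_zero (u : 𝒮 n) :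
    ∑ a, ∑ b, ∑ c, ∑ m, pdUpDer ginv m (K a b c) * pdDer m (pdDer a (pdDer b (pdDer c u))) = 0 := by
  have h := sum_sum_sum_sum_add_cycle_mul (fun m a b c => pdUpDer ginv m (K a b c))
    (fun m a b c => pdDer m (pdDer a (pdDer b (pdDer c u))))
    (fun a b _ _ => by rw [pdDer_comm b a]) (fun _ b c _ => by rw [pdDer_comm c b])
    (fun _ _ c d => by rw [pdDer_comm d c])
  simp only [hK.killing, zero_mul, sum_const_zero] at h
  linear_combination (norm := module) (-1 / 4 : ℝ) • h

theorem sum_lapOp_mul_add_three_nsmul_sum_pdUpDer_divergence_mul (u : 𝒮 n) :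
    ∑ a, ∑ b, ∑ c, lapOp ginv (K a b c) * pdDer a (pdDer b (pdDer c u)) +
      3 • ∑ a, ∑ b, ∑ m, pdUpDer ginv m (divergence K a b) * pdDer m (pdDer a (pdDer b u)) =
      0 := by
  have h := sum_sum_sum_add_cycle_mul (fun a b c => pdUpDer ginv a (divergence K b c))
    (fun a b c => pdDer a (pdDer b (pdDer c u)))
    (fun a b _ => by rw [pdDer_comm b a]) (fun _ b c => by rw [pdDer_comm c b])
  rw [← h]
  simp only [← sum_add_distrib, ← add_mul, ← add_assoc, hK.lapOp_add_pdUpDer_divergence, zero_mul,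
    sum_const_zero]

variable (hg : g.IsSymm) (hginv : g * ginv = 1)
include hg hginv

theorem two_nsmul_divergence_add_pdUpDer_metricTrace (c d : Fin n) :
    2 • divergence K c d + pdUpDer ginv c (metricTrace g K d) +
      pdUpDer ginv d (metricTrace g K c) = 0 := by
  have h := congrArg (fun v : Fin n → Fin n → 𝒮 n => ∑ p, ∑ q, g p q • v p q)
    (funext₂ fun p q => hK.killing p q c d)
  simp only [smul_add, sum_add_distrib, smul_zero, sum_const_zero] at h
  rw [sum_sum_smul_pdUpDer_left ginv hg hginv (fun q => K q c d),
    sum_sum_smul_pdUpDer_right ginv hg hginv (fun p => K p c d)] at h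
  rw [divergence, pdUpDer_metricTrace, pdUpDer_metricTrace]
  linear_combination (norm := module) h

theorem sum_sum_smul_divergence_eq_zero : ∑ c, ∑ d, g c d • divergence K c d = 0 := by
  have h := congrArg (fun v : Fin n → Fin n → 𝒮 n => ∑ c, ∑ d, g c d • v c d)
    (funext₂ (hK.two_nsmul_divergence_add_pdUpDer_metricTrace hg hginv))
  simp only [smul_add, sum_add_distrib, smul_zero, sum_const_zero, smul_comm (g _ _) (2 : ℕ),
    ← smul_sum] at h
  rw [sum_sum_smul_pdUpDer_left ginv hg hginv, sum_sum_smul_pdUpDer_right ginv hg hginv] at h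
  have htrace : ∑ c, ∑ d, g c d • divergence K c d = ∑ r, pdDer r (metricTrace g K r) := by
    simp only [divergence, metricTrace, map_sum, smul_sum]
    conv_rhs => rw [sum_comm]
    refine sum_congr rfl fun c _ => ?_
    conv_rhs => rw [sum_comm]
    exact sum_congr rfl fun d _ => sum_congr rfl fun r _ => by
      rw [hK.cycle r c d, Derivation.map_smul]
  linear_combination (norm := module) (1 / 4 : ℝ) • h + (1 / 2 : ℝ) • htrace

theorem lapOp_metricTrace_add_two_nsmul_doubleDivergence (b : Fin n) :
    lapOp ginv (metricTrace g K b) + 2 • doubleDivergence K b = 0 := by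
  have h := congrArg (fun v : Fin n → Fin n → 𝒮 n => ∑ c, ∑ d, g c d • v c d)
    (funext₂ fun c d => hK.lapOp_add_pdUpDer_divergence b c d)
  simp only [smul_add, sum_add_distrib, smul_zero, sum_const_zero] at h
  rw [sum_sum_smul_pdUpDer_left ginv hg hginv, sum_sum_smul_pdUpDer_right ginv hg hginv] at h
  have hlap : ∑ c, ∑ d, g c d • lapOp ginv (K b c d) = lapOp ginv (metricTrace g K b) := by
    simp only [metricTrace, map_sum, map_smul, hK.cycle b]
  have hdiv : ∑ c, ∑ d, g c d • pdUpDer ginv b (divergence K c d) = 0 := by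
    simp only [← Derivation.map_smul, ← map_sum, hK.sum_sum_smul_divergence_eq_zero hg hginv,
      map_zero]
  have hS : ∑ d, pdDer d (divergence K b d) = doubleDivergence K b := by
    simp only [hK.doubleDivergence_eq, hK.divergence_comm]
  rw [hlap, hdiv, hS] at h
  linear_combination (norm := module) h

theorem lapOp_divergence_eq (c d : Fin n) :
    lapOp ginv (divergence K c d) =
      pdUpDer ginv c (doubleDivergence K d) + pdUpDer ginv d (doubleDivergence K c) := by
  have h := congrArg (lapOp ginv) (hK.two_nsmul_divergence_add_pdUpDer_metricTrace hg hginv c d)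
  have hτ : ∀ e, lapOp ginv (metricTrace g K e) = -(2 • doubleDivergence K e) := fun e =>
    eq_neg_of_add_eq_zero_left (hK.lapOp_metricTrace_add_two_nsmul_doubleDivergence hg hginv e)
  simp only [map_add, map_nsmul, map_zero, ← pdUpDer_lapOp_comm, hτ, map_neg] at h
  linear_combination (norm := module) (1 / 2 : ℝ) • h

theorem lapOp_divergence_eq_zero (c d : Fin n) : lapOp ginv (divergence K c d) = 0 := by
  linear_combination (norm := module)
    (1 / 3 : ℝ) • (hK.two_nsmul_lapOp_divergence_add_pdUpDer_doubleDivergence c d +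
      hK.lapOp_divergence_eq hg hginv c d)

theorem pdUpDer_doubleDivergence_add_eq_zero (c d : Fin n) :
    pdUpDer ginv c (doubleDivergence K d) + pdUpDer ginv d (doubleDivergence K c) = 0 := by
  rw [← hK.lapOp_divergence_eq hg hginv, hK.lapOp_divergence_eq_zero hg hginv]

theorem lapOp_doubleDivergence_eq_zero (c : Fin n) : lapOp ginv (doubleDivergence K c) = 0 := by
  simp [hK.doubleDivergence_eq, map_sum, ← pdDer_lapOp_comm, hK.lapOp_divergence_eq_zero hg hginv]

theorem sum_pdUpDer_doubleDivergence_mul_eq_zero (u : 𝒮 n) :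
    ∑ c, ∑ m, pdUpDer ginv m (doubleDivergence K c) * pdDer m (pdDer c u) = 0 := by
  have h := sum_sum_add_swap_mul (fun a b => pdUpDer ginv a (doubleDivergence K b))
    (fun a b => pdDer a (pdDer b u)) (fun a b => by rw [pdDer_comm b a])
  simp only [hK.pdUpDer_doubleDivergence_add_eq_zero hg hginv, zero_mul, sum_const_zero] at h
  linear_combination (norm := module) (-1 / 2 : ℝ) • h

theorem lapOp_killingOperator (u : 𝒮 n) :
    lapOp ginv (killingOperator K u) = killingOperator K (lapOp ginv u) := by
  have hsym : ginv.IsSymm := Matrix.inv_eq_right_inv hginv ▸ hg.inv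
  simp only [killingOperator, map_add, map_smul, map_sum, lapOp_mul ginv hsym, sum_add_distrib,
    ← smul_sum, ← pdDer_lapOp_comm, hK.lapOp_divergence_eq_zero hg hginv,
    hK.lapOp_doubleDivergence_eq_zero hg hginv, zero_mul, sum_const_zero]
  have h4 := hK.sum_pdUpDer_mul_pdDer_eq_zero u
  have h3 := hK.sum_lapOp_mul_add_three_nsmul_sum_pdUpDer_divergence_mul u
  have h2 := hK.sum_pdUpDer_doubleDivergence_mul_eq_zero hg hginv u
  linear_combination (norm := module) 2 • h4 + h3 + (1 / 2 : ℝ) • h2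

end IsKillingTensor₃

end

theorem stmt10_general {n : ℕ}
    (g ginv : Matrix (Fin n) (Fin n) ℝ) (hgsym : g.IsSymm) (hginv : g * ginv = 1)
    (k : Fin n → Fin n → Fin n → (Fin n → ℝ) → ℝ)
    (hsmooth : ∀ a b c, ContDiff ℝ (⊤ : ℕ∞) (k a b c))
    (hsymk : ∀ (a b c : Fin n) (σ : Equiv.Perm (Fin 3)),
      k (![a, b, c] (σ 0)) (![a, b, c] (σ 1)) (![a, b, c] (σ 2)) = k a b c)
    (hkill : ∀ (a b c d : Fin n) (x : Fin n → ℝ),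
      pdUp ginv a (k b c d) x + pdUp ginv b (k a c d) x +
        pdUp ginv c (k a b d) x + pdUp ginv d (k a b c) x = 0)
    (D : ((Fin n → ℝ) → ℝ) → ((Fin n → ℝ) → ℝ))
    (hD : ∀ f x, D f x =
      (∑ a, ∑ b, ∑ c, k a b c x * pd a (pd b (pd c f)) x) +
        (3 / 2) * (∑ b, ∑ c, (∑ r, pd r (k r b c) x) * pd b (pd c f) x) +
        (1 / 4) * (∑ c, (∑ r, ∑ s, pd r (pd s (k r s c)) x) * pd c f x)) :
    ∀ f, ContDiff ℝ (⊤ : ℕ∞) f → ∀ x, lap ginv (D f) x = D (lap ginv f) x := by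
  intro f hf x
  set K : Fin n → Fin n → Fin n → smoothFunctions n := fun a b c => ⟨k a b c, hsmooth a b c⟩
  have hK : IsKillingTensor₃ ginv K :=
    { swap₀₁ := fun a b c => Subtype.ext (by
        simpa [K, Equiv.swap_apply_def, Fin.ext_iff] using hsymk a b c (Equiv.swap 0 1))
      swap₁₂ := fun a b c => Subtype.ext (by
        simpa [K, Equiv.swap_apply_def, Fin.ext_iff] using hsymk a b c (Equiv.swap 1 2))
      killing := fun a b c d => Subtype.ext (funext fun x => by
        simpa [K, coe_pdUpDer] using hkill a b c d x) }
  have hDK : ∀ u : smoothFunctions n, D u = killingOperator K u := fun u => funext fun x => by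
    rw [hD]
    simp [K, killingOperator, divergence, doubleDivergence]
  let u : smoothFunctions n := ⟨f, hf⟩
  calc lap ginv (D f) x = (lapOp ginv (killingOperator K u) : (Fin n → ℝ) → ℝ) x := by
        rw [coe_lapOp, ← hDK]
    _ = (killingOperator K (lapOp ginv u) : (Fin n → ℝ) → ℝ) x := by
        rw [hK.lapOp_killingOperator hgsym hginv u]
    _ = D (lap ginv f) x := by rw [← hDK, coe_lapOp]

/-- for a Killing 3-tensor `k` on `ℝⁿ`, the third order operator
`D f = k^{abc} ∂_a ∂_b ∂_c f + (3/2)(∂_r k^{rbc}) ∂_b ∂_c f + (1/4)(∂_r ∂_s k^{rsc}) ∂_c f`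
commutes with the Laplacian. -/
theorem stmt10 {n : ℕ} (hn : 0 < n)
    (g ginv : Matrix (Fin n) (Fin n) ℝ) (hgsym : g.IsSymm) (hginv : g * ginv = 1)
    (k : Fin n → Fin n → Fin n → (Fin n → ℝ) → ℝ)
    (hsmooth : ∀ a b c, ContDiff ℝ (⊤ : ℕ∞) (k a b c))
    (hsymk : ∀ (a b c : Fin n) (σ : Equiv.Perm (Fin 3)),
      k (![a, b, c] (σ 0)) (![a, b, c] (σ 1)) (![a, b, c] (σ 2)) = k a b c)
    (hkill : ∀ (a b c d : Fin n) (x : Fin n → ℝ),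
      pdUp ginv a (k b c d) x + pdUp ginv b (k a c d) x +
        pdUp ginv c (k a b d) x + pdUp ginv d (k a b c) x = 0)
    (D : ((Fin n → ℝ) → ℝ) → ((Fin n → ℝ) → ℝ))
    (hD : ∀ f x, D f x =
      (∑ a, ∑ b, ∑ c, k a b c x * pd a (pd b (pd c f)) x) +
        (3 / 2) * (∑ b, ∑ c, (∑ r, pd r (k r b c) x) * pd b (pd c f) x) +
        (1 / 4) * (∑ c, (∑ r, ∑ s, pd r (pd s (k r s c)) x) * pd c f x)) :
    ∀ f, ContDiff ℝ (⊤ : ℕ∞) f → ∀ x, lap ginv (D f) x = D (lap ginv f) x :=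
  stmt10_general g ginv hgsym hginv k hsmooth hsymk hkill D hD
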